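/- Let δ, ε > 0 and suppose l : [0,∞) → [0,∞) is continuous with l(t) → l_∞ exponentially: |l(t) - l_∞| ≤ C e^{-ηt} for some η > 0 with η < δ + ε. If s solves s'(t) = -(δ+ε)s(t) + l(t)(1 - s(t)) with s(0) ∈ [0,1), then |s(t) - s_∞| ≤ C' e^{-ηt} for some constant C', where s_∞ = l_∞/(δ+ε+l_∞). -/

import Mathlib

/-!
Multiplying the deviation `s t - s∞` by `exp (η t)` turns the equation into
`v' = -(δ + ε + l t - η) v + f t` with a forcing term bounded by `C`, and the damping rate
`δ + ε + l t - η` is at least `δ + ε - η > 0` because `l ≥ 0`. A scalar quantity with such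
damping can never cross the level `|v 0| + C / (δ + ε - η)`, which gives the decay `exp (-η t)`
for the deviation itself.
-/

open Filter Topology Real

theorem tendsto_of_abs_sub_le_mul_exp_neg {l : ℝ → ℝ} {L C η : ℝ} (hη : 0 < η)
    (h : ∀ t, 0 ≤ t → |l t - L| ≤ C * exp (-η * t)) : Tendsto l atTop (𝓝 L) := by
  rw [tendsto_iff_norm_sub_tendsto_zero]
  have hexp : Tendsto (fun t => C * exp (-η * t)) atTop (𝓝 0) := by
    have := (tendsto_exp_neg_atTop_nhds_zero.comp (tendsto_id.const_mul_atTop hη)).const_mul C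
    simpa [Function.comp_def, neg_mul] using this
  refine squeeze_zero' (Eventually.of_forall fun t => norm_nonneg _) ?_ hexp
  filter_upwards [eventually_ge_atTop 0] with t ht using h t ht

section DampedLinear

variable {v a f : ℝ → ℝ} {μ : ℝ}

/-- At the level `M` itself the derivative is `-a M + f ≤ -μ M + f < 0`, so `v` cannot cross it. -/
theorem le_of_hasDerivAt_damped {M : ℝ}
    (hv : ∀ t, 0 ≤ t → HasDerivAt v (-a t * v t + f t) t) (ha : ∀ t, 0 ≤ t → μ ≤ a t)
    (hM : 0 ≤ M) (hv0 : v 0 ≤ M) (hf : ∀ t, 0 ≤ t → f t < μ * M) :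
    ∀ t, 0 ≤ t → v t ≤ M := by
  intro t ht
  refine image_le_of_deriv_right_lt_deriv_boundary' (a := 0) (b := t) (B := fun _ => M)
    (B' := fun _ => 0) (fun x hx => (hv x hx.1).continuousAt.continuousWithinAt)
    (fun x hx => (hv x hx.1).hasDerivWithinAt) hv0 continuousOn_const
    (fun _ _ => hasDerivWithinAt_const _ _ _) ?_ ⟨ht, le_rfl⟩
  intro x hx hvx
  have hdamp : μ * M ≤ a x * v x := by rw [hvx]; exact mul_le_mul_of_nonneg_right (ha x hx.1) hM
  linarith [hf x hx.1]

theorem abs_le_of_hasDerivAt_damped {C : ℝ} (hμ : 0 < μ)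
    (hv : ∀ t, 0 ≤ t → HasDerivAt v (-a t * v t + f t) t) (ha : ∀ t, 0 ≤ t → μ ≤ a t)
    (hf : ∀ t, 0 ≤ t → |f t| ≤ C) :
    ∀ t, 0 ≤ t → |v t| ≤ |v 0| + C / μ := by
  intro t ht
  have hC : 0 ≤ C := (abs_nonneg _).trans (hf 0 le_rfl)
  refine le_of_forall_gt_imp_ge_of_dense fun M hM => ?_
  have hCM : C < μ * M := by
    rw [← div_lt_iff₀' hμ]; linarith [abs_nonneg (v 0)]
  have hfM : ∀ t, 0 ≤ t → |f t| < μ * M := fun t ht => (hf t ht).trans_lt hCM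
  have hneg : ∀ t, 0 ≤ t → HasDerivAt (-v) (-a t * (-v) t + -f t) t := fun t ht =>
    (hv t ht).neg.congr_deriv (by simp only [Pi.neg_apply]; ring)
  have hv0 : |v 0| ≤ M := by linarith [div_nonneg hC hμ.le]
  have hM0 : 0 ≤ M := (abs_nonneg _).trans hv0
  have hlower := le_of_hasDerivAt_damped hneg ha hM0 ((neg_le_abs _).trans hv0)
    (fun t ht => (neg_le_abs (f t)).trans_lt (hfM t ht)) t ht
  have hupper := le_of_hasDerivAt_damped hv ha hM0 ((le_abs_self _).trans hv0)
    (fun t ht => (le_abs_self (f t)).trans_lt (hfM t ht)) t ht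
  simp only [Pi.neg_apply] at hlower
  exact abs_le.2 ⟨by linarith, hupper⟩

theorem hasDerivAt_exp_mul_of_damped {b g : ℝ → ℝ} {η t : ℝ}
    (hv : HasDerivAt v (-b t * v t + g t) t) :
    HasDerivAt (fun t => exp (η * t) * v t)
      (-(b t - η) * (exp (η * t) * v t) + exp (η * t) * g t) t := by
  have hexp : HasDerivAt (fun t => exp (η * t)) (exp (η * t) * η) t := by
    simpa using ((hasDerivAt_id t).const_mul η).exp
  exact (hexp.mul hv).congr_deriv (by ring)

theorem abs_le_mul_exp_of_hasDerivAt_damped {u b g : ℝ → ℝ} {k η C : ℝ} (hηk : η < k)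
    (hu : ∀ t, 0 ≤ t → HasDerivAt u (-b t * u t + g t) t) (hb : ∀ t, 0 ≤ t → k ≤ b t)
    (hg : ∀ t, 0 ≤ t → |g t| ≤ C * exp (-η * t)) :
    ∀ t, 0 ≤ t → |u t| ≤ (|u 0| + C / (k - η)) * exp (-η * t) := by
  have hforcing : ∀ t, 0 ≤ t → |exp (η * t) * g t| ≤ C := fun t ht => by
    rw [abs_mul, abs_exp]
    calc exp (η * t) * |g t| ≤ exp (η * t) * (C * exp (-η * t)) :=
          mul_le_mul_of_nonneg_left (hg t ht) (exp_pos _).le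
      _ = C := by rw [mul_left_comm, ← exp_add]; simp
  intro t ht
  have hv := abs_le_of_hasDerivAt_damped (sub_pos.2 hηk)
    (fun t ht => hasDerivAt_exp_mul_of_damped (η := η) (hu t ht))
    (fun t ht => sub_le_sub_right (hb t ht) η) hforcing t ht
  simp only [mul_zero, exp_zero, one_mul, abs_mul, abs_exp] at hv
  have hexp : exp (η * t) * exp (-η * t) = 1 := by rw [← exp_add]; simp
  calc |u t| = exp (η * t) * |u t| * exp (-η * t) := by rw [mul_right_comm, hexp, one_mul]
    _ ≤ _ := mul_le_mul_of_nonneg_right hv (exp_pos _).le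

end DampedLinear

theorem receptor_inherits_decay_general (δ ε lInf η C : ℝ)
    (hη : 0 < η) (hη' : η < δ + ε) (hC : 0 < C)
    (l : ℝ → ℝ) (hl_nonneg : ∀ t, 0 ≤ t → 0 ≤ l t)
    (hl_conv : ∀ t, 0 ≤ t → |l t - lInf| ≤ C * Real.exp (-η * t))
    (s : ℝ → ℝ)
    (hode : ∀ t, 0 ≤ t → HasDerivAt s (-(δ + ε) * s t + l t * (1 - s t)) t) :
    ∃ C' : ℝ, 0 < C' ∧ ∀ t, 0 ≤ t →
      |s t - lInf / (δ + ε + lInf)| ≤ C' * Real.exp (-η * t) := by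
  set k := δ + ε
  set sInf := lInf / (k + lInf)
  have hlInf : 0 ≤ lInf := ge_of_tendsto (tendsto_of_abs_sub_le_mul_exp_neg hη hl_conv)
    (eventually_ge_atTop 0 |>.mono hl_nonneg)
  have hk : 0 < k + lInf := by linarith
  have hsInf : sInf * (k + lInf) = lInf := div_mul_cancel₀ _ hk.ne'
  have hsInf0 : 0 ≤ sInf := div_nonneg hlInf hk.le
  have hsInf1 : 0 ≤ 1 - sInf := by rw [sub_nonneg, div_le_one hk]; linarith
  have hdev : ∀ t, 0 ≤ t → HasDerivAt (fun t => s t - sInf)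
      (-(k + l t) * (s t - sInf) + (l t - lInf) * (1 - sInf)) t := fun t ht =>
    ((hode t ht).sub_const sInf).congr_deriv (by linear_combination -hsInf)
  have hforcing : ∀ t, 0 ≤ t → |(l t - lInf) * (1 - sInf)| ≤ C * exp (-η * t) := fun t ht => by
    rw [abs_mul, abs_of_nonneg hsInf1]
    exact (mul_le_of_le_one_right (abs_nonneg _) (by linarith)).trans (hl_conv t ht)
  refine ⟨|s 0 - sInf| + C / (k - η), by have := sub_pos.2 hη'; positivity, ?_⟩
  exact abs_le_mul_exp_of_hasDerivAt_damped hη' hdev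
    (fun t ht => le_add_of_nonneg_right (hl_nonneg t ht)) hforcing

theorem receptor_inherits_decay (δ ε lInf η C : ℝ) (hδ : 0 < δ) (hε : 0 < ε)
    (hη : 0 < η) (hη' : η < δ + ε) (hC : 0 < C)
    (l : ℝ → ℝ) (hl_cont : Continuous l) (hl_nonneg : ∀ t, 0 ≤ t → 0 ≤ l t)
    (hl_conv : ∀ t, 0 ≤ t → |l t - lInf| ≤ C * Real.exp (-η * t))
    (s : ℝ → ℝ)
    (hode : ∀ t, 0 ≤ t → HasDerivAt s (-(δ + ε) * s t + l t * (1 - s t)) t)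
    (hs0 : 0 ≤ s 0) (hs0' : s 0 < 1) :
    ∃ C' : ℝ, 0 < C' ∧ ∀ t, 0 ≤ t →
      |s t - lInf / (δ + ε + lInf)| ≤ C' * Real.exp (-η * t) :=
  receptor_inherits_decay_general δ ε lInf η C hη hη' hC l hl_nonneg hl_conv s hode
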